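/- arXiv:1606.04439 — 7 statements merged into one kernel-verified Lean document; each statement's English description precedes it below -/
import Mathlib

section
/- Let G and H be groups and let M : G ⇸ H be an atlas bimodule. Then for every element m ∈ M there exists a unique group homomorphism Λ_m : G → H such that m · g = Λ_m(g) • m for all g ∈ G, and this homomorphism Λ_m is injective. -/
/-- An atlas bimodule `M : G ⇸ H`: a nonempty set with a left `H`-action and a
right `G`-action which commute, such that the left action is free and transitive
and the right action is free. -/
structure AtlasBimodule (G H : Type*) [Group G] [Group H] (M : Type*) where
  lsmul : H → M → M
  rsmul : M → G → M
  lsmul_one : ∀ m, lsmul 1 m = m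
  lsmul_mul : ∀ h h' m, lsmul (h * h') m = lsmul h (lsmul h' m)
  rsmul_one : ∀ m, rsmul m 1 = m
  rsmul_mul : ∀ m g g', rsmul m (g * g') = rsmul (rsmul m g) g'
  comm : ∀ h m g, rsmul (lsmul h m) g = lsmul h (rsmul m g)
  nonempty : Nonempty M
  lsmul_free : ∀ h m, lsmul h m = m → h = 1
  lsmul_trans : ∀ m m', ∃ h, lsmul h m = m'
  rsmul_free : ∀ g m, rsmul m g = m → g = 1

/-- Lemma 3.3: every element `m` of an atlas bimodule determines a unique group
homomorphism `Λ_m : G → H` with `m · g = Λ_m(g) • m`, and it is injective. -/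
theorem atlasBimodule_exists_unique_hom {G H M : Type*} [Group G] [Group H]
    (B : AtlasBimodule G H M) (m : M) :
    (∃! Λ : G →* H, ∀ g : G, B.rsmul m g = B.lsmul (Λ g) m) ∧
    (∀ Λ : G →* H, (∀ g : G, B.rsmul m g = B.lsmul (Λ g) m) →
      Function.Injective Λ) := by
  -- cancellation for the free left action
  have lcancel : ∀ h h' : H, B.lsmul h m = B.lsmul h' m → h = h' := by
    intro h h' e
    have : B.lsmul (h'⁻¹ * h) m = m := by
      rw [B.lsmul_mul, e, ← B.lsmul_mul, inv_mul_cancel, B.lsmul_one]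
    have := B.lsmul_free _ _ this
    exact (inv_mul_eq_one.mp this).symm
  -- define the function
  have hspec : ∀ g : G, B.lsmul (Classical.choose (B.lsmul_trans m (B.rsmul m g))) m
      = B.rsmul m g := fun g => Classical.choose_spec (B.lsmul_trans m (B.rsmul m g))
  set f : G → H := fun g => Classical.choose (B.lsmul_trans m (B.rsmul m g)) with hf
  have hmul : ∀ g g' : G, f (g * g') = f g * f g' := by
    intro g g'
    apply lcancel
    rw [hspec, B.rsmul_mul, ← hspec g, B.comm, ← hspec g', ← B.lsmul_mul]
  have hone : f 1 = 1 := by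
    apply lcancel
    rw [hspec, B.rsmul_one, B.lsmul_one]
  refine ⟨⟨⟨⟨f, hone⟩, hmul⟩, fun g => (hspec g).symm, ?_⟩, ?_⟩
  · intro Λ hΛ
    ext g
    exact lcancel _ _ ((hΛ g).symm.trans (hspec g).symm)
  · intro Λ hΛ
    have : ∀ g, Λ g = 1 → g = 1 := by
      intro g hg
      apply B.rsmul_free g m
      rw [hΛ g, hg, B.lsmul_one]
    intro a b hab
    have : a * b⁻¹ = 1 := this _ (by rw [map_mul, hab, map_inv, mul_inv_cancel])
    exact mul_inv_eq_one.mp this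
end

section
/- Let G and H be groups and let M be a nonempty set equipped with a left H-action and a right G-action which commute ((h • m) · g = h • (m · g)), such that the left H-action is free and transitive. Fix a base point e ∈ M. Then: (i) there is a unique group homomorphism ψ : G → H such that e · g = ψ(g) • e for all g ∈ G; (ii) the map Φ : H → M defined by Φ(h) = h • e is a bijection satisfying Φ(h' * h) = h' • Φ(h) and Φ(h * ψ(g)) = Φ(h) · g for all h, h' ∈ H and g ∈ G. Hence every bimodule on which H acts freely and transitively on the left is isomorphic, as a bimodule, to the bimodule induced by a group homomorphism G → H. -/
/-- A bimodule `M : G ⇸ H`: a set with a left `H`-action and a right `G`-action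
which commute. -/
structure Bimodule (G H : Type*) [Group G] [Group H] (M : Type*) where
  lsmul : H → M → M
  rsmul : M → G → M
  lsmul_one : ∀ m, lsmul 1 m = m
  lsmul_mul : ∀ h h' m, lsmul (h * h') m = lsmul h (lsmul h' m)
  rsmul_one : ∀ m, rsmul m 1 = m
  rsmul_mul : ∀ m g g', rsmul m (g * g') = rsmul (rsmul m g) g'
  comm : ∀ h m g, rsmul (lsmul h m) g = lsmul h (rsmul m g)

/-- Section 3.2: if the left `H`-action on a bimodule `M : G ⇸ H` is free and
transitive, then any choice of base point `e ∈ M` determines a unique group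
homomorphism `ψ : G → H` with `e · g = ψ(g) • e`, and `Φ(h) = h • e` is a
bimodule isomorphism from the bimodule induced by `ψ` onto `M`. -/
theorem bimodule_free_transitive_induced_by_hom {G H M : Type*} [Group G] [Group H]
    (B : Bimodule G H M)
    (lfree : ∀ (h : H) (m : M), B.lsmul h m = m → h = 1)
    (ltrans : ∀ m m' : M, ∃ h : H, B.lsmul h m = m')
    (e : M) :
    (∃! ψ : G →* H, ∀ g : G, B.rsmul e g = B.lsmul (ψ g) e) ∧
    Function.Bijective (fun h : H => B.lsmul h e) ∧
    (∀ h h' : H, B.lsmul (h' * h) e = B.lsmul h' (B.lsmul h e)) ∧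
    (∀ ψ : G →* H, (∀ g : G, B.rsmul e g = B.lsmul (ψ g) e) →
      ∀ (h : H) (g : G), B.lsmul (h * ψ g) e = B.rsmul (B.lsmul h e) g) := by

  -- injectivity of h ↦ h • e
  have inj : ∀ h h' : H, B.lsmul h e = B.lsmul h' e → h = h' := by
    intro h h' hh
    have : B.lsmul (h'⁻¹ * h) e = e := by
      rw [B.lsmul_mul, hh, ← B.lsmul_mul, inv_mul_cancel, B.lsmul_one]
    have := lfree _ _ this
    exact (inv_mul_eq_one.mp this).symm
  choose φ hφ using fun g => ltrans e (B.rsmul e g)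
  have hmul : ∀ g g', φ (g * g') = φ g * φ g' := by
    intro g g'
    apply inj
    rw [hφ, B.lsmul_mul, hφ, ← B.comm, hφ, ← B.rsmul_mul]
  have hone : φ 1 = 1 := by
    apply inj
    rw [hφ, B.rsmul_one, B.lsmul_one]
  let ψ : G →* H := { toFun := φ, map_one' := hone, map_mul' := hmul }
  refine ⟨⟨ψ, fun g => (hφ g).symm, ?_⟩, ⟨fun h h' hh => inj h h' hh, fun m => ltrans e m⟩,
    fun h h' => B.lsmul_mul h' h e, fun ψ' hψ' h g => ?_⟩
  · intro ψ' hψ'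
    ext g
    exact inj _ _ (by show B.lsmul (ψ' g) e = B.lsmul (φ g) e; rw [hφ, hψ'])
  · rw [B.lsmul_mul, ← hψ', B.comm]
end

section
/- Let M : G ⇸ H and N : H ⇸ K be atlas bimodules. Define a relation on N × M by (n, m) ≈ (n', m') if and only if there is h ∈ H with n' = n · h and m = h • m'. Then ≈ is an equivalence relation; the operations k • [n, m] := [k • n, m] and [n, m] · g := [n, m · g] are well defined on the quotient (N × M)/≈; and with these actions the quotient is an atlas bimodule G ⇸ K, i.e. it is nonempty, the left and right actions commute, the left K-action is free and transitive, and the right G-action is free. -/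
/-- The tensor product `N ⊗_H M` of atlas bimodules `M : G ⇸ H` and `N : H ⇸ K`:
the relation `(n, m) ≈ (n', m') ↔ ∃ h, n' = n · h ∧ m = h • m'` is an
equivalence relation, the actions `k • [n, m] = [k • n, m]` and
`[n, m] · g = [n, m · g]` are well defined on the quotient, and the quotient
with these actions is an atlas bimodule `G ⇸ K`. -/
theorem atlasBimodule_tensor {G H K M N : Type*} [Group G] [Group H] [Group K]
    (BM : AtlasBimodule G H M) (BN : AtlasBimodule H K N) :
    let rel : N × M → N × M → Prop :=
      fun p q => ∃ h : H, q.1 = BN.rsmul p.1 h ∧ p.2 = BM.lsmul h q.2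
    Equivalence rel ∧
    ∃ B : AtlasBimodule G K (Quot rel),
      (∀ (k : K) (n : N) (m : M),
        B.lsmul k (Quot.mk rel (n, m)) = Quot.mk rel (BN.lsmul k n, m)) ∧
      (∀ (g : G) (n : N) (m : M),
        B.rsmul (Quot.mk rel (n, m)) g = Quot.mk rel (n, BM.rsmul m g)) := by
  intro rel
  have linvM : ∀ (h : H) (m : M), BM.lsmul h⁻¹ (BM.lsmul h m) = m := by
    intro h m; rw [← BM.lsmul_mul, inv_mul_cancel, BM.lsmul_one]
  have rinvN : ∀ (n : N) (h : H), BN.rsmul (BN.rsmul n h) h⁻¹ = n := by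
    intro n h; rw [← BN.rsmul_mul, mul_inv_cancel, BN.rsmul_one]
  have hequiv : Equivalence rel := by
    constructor
    · intro p; exact ⟨1, by rw [BN.rsmul_one], by rw [BM.lsmul_one]⟩
    · rintro p q ⟨h, h1, h2⟩
      exact ⟨h⁻¹, by rw [h1, rinvN], by rw [h2, linvM]⟩
    · rintro p q r ⟨h, h1, h2⟩ ⟨h', h1', h2'⟩
      exact ⟨h * h', by rw [h1', h1, BN.rsmul_mul], by rw [h2, h2', BM.lsmul_mul]⟩
  refine ⟨hequiv, ?_⟩
  have quoteq : ∀ p q : N × M, Quot.mk rel p = Quot.mk rel q → rel p q := by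
    intro p q hpq
    exact (Equivalence.eqvGen_iff hequiv).mp (Quot.eq.mp hpq)
  have lwd : ∀ (k : K) (p q : N × M), rel p q →
      Quot.mk rel (BN.lsmul k p.1, p.2) = Quot.mk rel (BN.lsmul k q.1, q.2) := by
    rintro k p q ⟨h, h1, h2⟩
    exact Quot.sound ⟨h, by rw [h1, BN.comm], h2⟩
  have rwd : ∀ (g : G) (p q : N × M), rel p q →
      Quot.mk rel (p.1, BM.rsmul p.2 g) = Quot.mk rel (q.1, BM.rsmul q.2 g) := by
    rintro g p q ⟨h, h1, h2⟩
    exact Quot.sound ⟨h, h1, by rw [h2, BM.comm]⟩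
  refine ⟨{
    lsmul := fun k => Quot.lift (fun p => Quot.mk rel (BN.lsmul k p.1, p.2)) (lwd k)
    rsmul := fun x g => Quot.lift (fun p => Quot.mk rel (p.1, BM.rsmul p.2 g)) (rwd g) x
    lsmul_one := by
      intro x; induction x using Quot.ind with
      | _ p => simp only [Quot.lift, BN.lsmul_one]
    lsmul_mul := by
      intro h h' x; induction x using Quot.ind with
      | _ p => simp only [Quot.lift, BN.lsmul_mul]
    rsmul_one := by
      intro x; induction x using Quot.ind with
      | _ p => simp only [Quot.lift, BM.rsmul_one]
    rsmul_mul := by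
      intro x g g'; induction x using Quot.ind with
      | _ p => simp only [Quot.lift, BM.rsmul_mul]
    comm := by
      intro k x g; induction x using Quot.ind with
      | _ p => rfl
    nonempty := by
      obtain ⟨m⟩ := BM.nonempty
      obtain ⟨n⟩ := BN.nonempty
      exact ⟨Quot.mk rel (n, m)⟩
    lsmul_free := by
      intro k x hx; induction x using Quot.ind with
      | _ p =>
        obtain ⟨h, h1, h2⟩ := quoteq _ _ hx
        have hh : h = 1 := BM.lsmul_free h p.2 h2.symm
        rw [hh, BN.rsmul_one] at h1
        exact BN.lsmul_free k p.1 h1.symm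
    lsmul_trans := by
      intro x y
      induction x using Quot.ind with
      | _ p =>
        induction y using Quot.ind with
        | _ q =>
          obtain ⟨h0, hm⟩ := BM.lsmul_trans q.2 p.2
          obtain ⟨k, hk⟩ := BN.lsmul_trans p.1 (BN.rsmul q.1 h0⁻¹)
          refine ⟨k, Quot.sound ⟨h0, ?_, hm.symm⟩⟩
          rw [hk, ← BN.rsmul_mul, inv_mul_cancel, BN.rsmul_one]
    rsmul_free := by
      intro g x hx; induction x using Quot.ind with
      | _ p =>
        obtain ⟨h, h1, h2⟩ := quoteq _ _ hx
        have hh : h = 1 := BN.rsmul_free h p.1 h1.symm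
        rw [hh, BM.lsmul_one] at h2
        exact BM.rsmul_free g p.2 h2
  }, fun k n m => rfl, fun g n m => rfl⟩
end

section
/- Let G, H, K be groups, let M : G ⇸ H, N : H ⇸ K and P : G ⇸ K be atlas bimodules, and let β : N × M → P be a map satisfying β(k • n, m) = k • β(n, m), β(n, m · g) = β(n, m) · g, and β(n · h, m) = β(n, h • m) for all n ∈ N, m ∈ M, g ∈ G, h ∈ H, k ∈ K. If β(n, m) = β(n, m') for some n ∈ N and m, m' ∈ M, then m = m'. -/
/-- Lemma 4.11 (left cancellation): for an `H`-balanced biequivariant pairing of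
atlas bimodules, `β(n, m) = β(n, m')` implies `m = m'`. -/
theorem atlasBimodule_left_cancel
    {G H K M N P : Type*} [Group G] [Group H] [Group K]
    (BM : AtlasBimodule G H M) (BN : AtlasBimodule H K N)
    (BP : AtlasBimodule G K P) (β : N → M → P)
    (hK : ∀ (k : K) (n : N) (m : M), β (BN.lsmul k n) m = BP.lsmul k (β n m))
    (hG : ∀ (n : N) (m : M) (g : G), β n (BM.rsmul m g) = BP.rsmul (β n m) g)
    (hH : ∀ (n : N) (h : H) (m : M), β (BN.rsmul n h) m = β n (BM.lsmul h m))
    (n : N) (m m' : M) (heq : β n m = β n m') :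
    m = m' := by
  obtain ⟨h, hh⟩ := BM.lsmul_trans m m'
  obtain ⟨k, hk⟩ := BN.lsmul_trans n (BN.rsmul n h)
  have h1 : β n m' = β n (BM.lsmul h m) := by rw [hh]
  have h2 : β n m = BP.lsmul k (β n m) :=
    heq.trans (h1.trans ((hH n h m).symm.trans (by rw [← hk, hK])))
  have hk1 : k = 1 := BP.lsmul_free k (β n m) h2.symm
  have hn : BN.rsmul n h = n := by rw [← hk, hk1, BN.lsmul_one]
  have hh1 : h = 1 := BN.rsmul_free h n hn
  rw [← hh, hh1, BM.lsmul_one]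
end

section
/- Let G, H, K be groups, let M : G ⇸ H, N : H ⇸ K and P : G ⇸ K be atlas bimodules, and let β : N × M → P be a map satisfying β(k • n, m) = k • β(n, m), β(n, m · g) = β(n, m) · g, and β(n · h, m) = β(n, h • m) for all n ∈ N, m ∈ M, g ∈ G, h ∈ H, k ∈ K. If β(n, m) = β(n', m) for some n, n' ∈ N and m ∈ M, then n = n'. -/
/-- Lemma 4.12 (right cancellation): for an `H`-balanced biequivariant pairing of
atlas bimodules, `β(n, m) = β(n', m)` implies `n = n'`. -/
theorem atlasBimodule_right_cancel
    {G H K M N P : Type*} [Group G] [Group H] [Group K]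
    (BM : AtlasBimodule G H M) (BN : AtlasBimodule H K N)
    (BP : AtlasBimodule G K P) (β : N → M → P)
    (hK : ∀ (k : K) (n : N) (m : M), β (BN.lsmul k n) m = BP.lsmul k (β n m))
    (hG : ∀ (n : N) (m : M) (g : G), β n (BM.rsmul m g) = BP.rsmul (β n m) g)
    (hH : ∀ (n : N) (h : H) (m : M), β (BN.rsmul n h) m = β n (BM.lsmul h m))
    (n n' : N) (m : M) (heq : β n m = β n' m) :
    n = n' := by
  obtain ⟨k, hk⟩ := BN.lsmul_trans n n'
  have : BP.lsmul k (β n m) = β n m := by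
    rw [← hK, hk, heq]
  have hk1 : k = 1 := BP.lsmul_free k (β n m) this
  rw [← hk, hk1, BN.lsmul_one]
end

section
/- Let G, H, G', H' be groups with surjective group homomorphisms ρ_G : G → G' and ρ_H : H → H'. Let M : G ⇸ H and C : G' ⇸ H' be atlas bimodules, and let ρ̃ : M → C be a map satisfying ρ̃(h • m) = ρ_H(h) • ρ̃(m) and ρ̃(m · g) = ρ̃(m) · ρ_G(g) for all h ∈ H, g ∈ G, m ∈ M, and such that whenever ρ̃(m) = ρ̃(m') there exists g ∈ G with m · g = m'. Then for every m ∈ M, the injective homomorphism Λ_m : G → H determined by m · g = Λ_m(g) • m maps the kernel of ρ_G onto the kernel of ρ_H; in particular, Λ_m restricts to a group isomorphism from ker ρ_G onto ker ρ_H. -/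
/-- The algebraic core of Lemma 4.7: given surjections `ρ_G : G → G'` and
`ρ_H : H → H'`, atlas bimodules `M : G ⇸ H` and `C : G' ⇸ H'`, and an
equivariant map `ρ̃ : M → C` with the kernel-transitivity property, the injective
homomorphism `Λ_m` determined by any `m ∈ M` maps `ker ρ_G` onto `ker ρ_H`, so it
restricts to an isomorphism on the kernels. -/
theorem atlasBimodule_kernel_iso {G H G' H' M C : Type*}
    [Group G] [Group H] [Group G'] [Group H']
    (ρG : G →* G') (ρH : H →* H')
    (hρG : Function.Surjective ρG) (hρH : Function.Surjective ρH)
    (BM : AtlasBimodule G H M) (BC : AtlasBimodule G' H' C)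
    (ρt : M → C)
    (hl : ∀ (h : H) (m : M), ρt (BM.lsmul h m) = BC.lsmul (ρH h) (ρt m))
    (hr : ∀ (m : M) (g : G), ρt (BM.rsmul m g) = BC.rsmul (ρt m) (ρG g))
    (hker : ∀ m m' : M, ρt m = ρt m' → ∃ g : G, BM.rsmul m g = m')
    (m : M) (Λ : G →* H)
    (hΛ : ∀ g : G, BM.rsmul m g = BM.lsmul (Λ g) m) :
    Λ '' (ρG.ker : Set G) = (ρH.ker : Set H) := by
  ext h
  simp only [Set.mem_image, SetLike.mem_coe, MonoidHom.mem_ker]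
  constructor
  · rintro ⟨g, hg, rfl⟩
    have h1 : ρt (BM.rsmul m g) = ρt m := by
      rw [hr, hg, BC.rsmul_one]
    have h2 : BC.lsmul (ρH (Λ g)) (ρt m) = ρt m := by
      rw [← hl, ← hΛ, h1]
    exact BC.lsmul_free _ _ h2
  · intro hh
    have h1 : ρt m = ρt (BM.lsmul h m) := by
      rw [hl, hh, BC.lsmul_one]
    obtain ⟨g, hg⟩ := hker _ _ h1
    refine ⟨g, ?_, ?_⟩
    · have : BC.rsmul (ρt m) (ρG g) = ρt m := by
        rw [← hr, hg, ← h1]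
      exact BC.rsmul_free _ _ this
    · have h2 : BM.lsmul (Λ g) m = BM.lsmul h m := by rw [← hΛ, hg]
      have h3 : BM.lsmul (h⁻¹ * Λ g) m = m := by
        rw [BM.lsmul_mul, h2, ← BM.lsmul_mul, inv_mul_cancel, BM.lsmul_one]
      have := BM.lsmul_free _ _ h3
      have := inv_mul_eq_one.mp this
      exact this.symm
end

section
/- Let X, Ũ_i, Ũ_j, Ũ_k be topological spaces with continuous maps π_i : Ũ_i → X, π_j : Ũ_j → X, π_k : Ũ_k → X, and let a group G_i act on Ũ_i by homeomorphisms with π_i(g • x) = π_i(x) for all g ∈ G_i, x ∈ Ũ_i. Call a map λ : Ũ_a → Ũ_b a chart embedding if it is injective and continuous and π_b ∘ λ = π_a. Assume: (a) for all x_i ∈ Ũ_i and x_j ∈ Ũ_j with π_i(x_i) = π_j(x_j) there exists a chart embedding ν : Ũ_i → Ũ_j with ν(x_i) = x_j; (b) for any two chart embeddings μ, μ' : Ũ_i → Ũ_k whose images overlap (μ(Ũ_i) ∩ μ'(Ũ_i) ≠ ∅) there exists g ∈ G_i with μ(x) = μ'(g • x) for all x ∈ Ũ_i. Then for any chart embeddings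 λ_ki : Ũ_i → Ũ_k and λ_kj : Ũ_j → Ũ_k with λ_ki(Ũ_i) ∩ λ_kj(Ũ_j) ≠ ∅, there exists a chart embedding λ_ji : Ũ_i → Ũ_j such that λ_kj ∘ λ_ji = λ_ki. -/
/-- A chart embedding over quotient maps `πa : A → X` and `πb : B → X`: an
injective continuous map `lam : A → B` with `πb ∘ lam = πa`. -/
def IsChartEmbedding {A B X : Type*} [TopologicalSpace A] [TopologicalSpace B]
    (πa : A → X) (πb : B → X) (lam : A → B) : Prop :=
  Function.Injective lam ∧ Continuous lam ∧ ∀ x, πb (lam x) = πa x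

/-- Lemma 4.2 (factorization of chart embeddings): assuming (a) the existence of
chart embeddings `Ũᵢ → Ũⱼ` through any prescribed pair of points lying over the
same point of `X`, and (b) that any two chart embeddings `Ũᵢ → Ũₖ` with
overlapping images differ by an element of the structure group `Gᵢ`, any two
chart embeddings `λ_ki : Ũᵢ → Ũₖ` and `λ_kj : Ũⱼ → Ũₖ` with overlapping images
admit a factorization `λ_ki = λ_kj ∘ λ_ji` through a chart embedding
`λ_ji : Ũᵢ → Ũⱼ`. -/
theorem chart_embedding_factorization
    {X Ui Uj Uk Gi : Type*}
    [TopologicalSpace X]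
    [TopologicalSpace Ui] [TopologicalSpace Uj] [TopologicalSpace Uk]
    [Group Gi]
    (πi : Ui → X) (πj : Uj → X) (πk : Uk → X)
    (hπi : Continuous πi) (hπj : Continuous πj) (hπk : Continuous πk)
    (act : Gi → Ui → Ui)
    (act_one : ∀ x, act 1 x = x)
    (act_mul : ∀ g g' x, act (g * g') x = act g (act g' x))
    (act_cont : ∀ g, Continuous (act g))
    (act_π : ∀ g x, πi (act g x) = πi x)
    (ha : ∀ (xi : Ui) (xj : Uj), πi xi = πj xj →
      ∃ ν : Ui → Uj, IsChartEmbedding πi πj ν ∧ ν xi = xj)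
    (hb : ∀ μ μ' : Ui → Uk, IsChartEmbedding πi πk μ → IsChartEmbedding πi πk μ' →
      (Set.range μ ∩ Set.range μ').Nonempty →
      ∃ g : Gi, ∀ x, μ x = μ' (act g x))
    (lki : Ui → Uk) (lkj : Uj → Uk)
    (hki : IsChartEmbedding πi πk lki) (hkj : IsChartEmbedding πj πk lkj)
    (hover : (Set.range lki ∩ Set.range lkj).Nonempty) :
    ∃ lji : Ui → Uj, IsChartEmbedding πi πj lji ∧ ∀ x, lkj (lji x) = lki x := by
  obtain ⟨y, ⟨xi, hxi⟩, ⟨xj, hxj⟩⟩ := hover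
  have hπ : πi xi = πj xj := by
    rw [← hki.2.2 xi, ← hkj.2.2 xj, hxi, hxj]
  obtain ⟨ν, hν, hνx⟩ := ha xi xj hπ
  have hcomp : IsChartEmbedding πi πk (fun x => lkj (ν x)) :=
    ⟨hkj.1.comp hν.1, hkj.2.1.comp hν.2.1, fun x => by rw [hkj.2.2, hν.2.2]⟩
  have hnon : (Set.range lki ∩ Set.range (fun x => lkj (ν x))).Nonempty := by
    refine ⟨y, ⟨xi, hxi⟩, ⟨xi, ?_⟩⟩
    simp only [hνx, hxj]
  obtain ⟨g, hg⟩ := hb lki (fun x => lkj (ν x)) hki hcomp hnon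
  refine ⟨fun x => ν (act g x), ⟨?_, hν.2.1.comp (act_cont g), fun x => by
    rw [hν.2.2, act_π]⟩, fun x => (hg x).symm⟩
  intro a b hab
  have := hν.1 hab
  have : act g⁻¹ (act g a) = act g⁻¹ (act g b) := by rw [this]
  rwa [← act_mul, ← act_mul, inv_mul_cancel, act_one, act_one] at this
end
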